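/- Let n ≥ 1 and let σ ∈ S_n avoid the permutation pattern 132, i.e. there are no indices i < j < k with σ(i) < σ(k) < σ(j). Then there is exactly one subset E of the positions {(i,j) : 1 ≤ j ≤ i ≤ n−1} whose associated word is a reduced word for σ; equivalently, there is a unique reduced Kogan face of type σ. -/

import Mathlib

/-!
Induction on the number of rows. Rows `1, …, m-1` only use letters `> b := n-1-m`, and row `m`
contributes an increasing word in letters `≥ b`. Let `σ` fix `0, …, b-1`, have no `132` starting at
a position `≥ b`, and let `σ d = b`. In a reduced Kogan word for `σ` the earlier rows fix `b`, so
row `m` sends `d` to `b`. It has no letter beyond `d`: its last letter would be a descent of `σ`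
to the right of `d`, completing a `132` with `σ d = b`. This forces row `m` to be the cycle
`s_b s_{b+1} ⋯ s_{d-1}`, which adds its length to that of any permutation fixing `0, …, b`; and
`σ` times its inverse fixes `0, …, b` and still avoids `132` from `b+1` on, so induction applies
to the remaining rows.
-/

/-- The simple transposition `s_i ∈ S_n` swapping `i` and `i + 1`
(`0`-based, so `i` ranges over `0, …, n − 2`). -/
def sT (n : ℕ) (i : ℕ) : Equiv.Perm (Fin n) :=
  if h : i + 1 < n then Equiv.swap ⟨i, Nat.lt_of_succ_lt h⟩ ⟨i + 1, h⟩ else 1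

/-- The number of inversions (Coxeter length) of a permutation of `Fin n`. -/
def invCount {n : ℕ} (σ : Equiv.Perm (Fin n)) : ℕ :=
  (Finset.univ.filter (fun p : Fin n × Fin n => p.1 < p.2 ∧ σ p.2 < σ p.1)).card

/-- `w = (i_1, …, i_ℓ)` is a reduced word for `σ ∈ S_n`: all letters are valid
(`0`-based: `i + 1 < n`), `σ = s_{i_1} s_{i_2} ⋯ s_{i_ℓ}`, and `ℓ` equals the number
of inversions of `σ`. -/
def IsReducedWordFor (n : ℕ) (σ : Equiv.Perm (Fin n)) (w : List ℕ) : Prop :=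
  (∀ i ∈ w, i + 1 < n) ∧ (w.map (sT n)).prod = σ ∧ w.length = invCount σ

/-- `E` is a set of positions `(i, j)` with `1 ≤ j ≤ i ≤ n − 1`, determining a Kogan
face of a Gelfand–Tsetlin polytope of size `n` (cut out by the equations
`x i j = x (i+1) j` for `(i, j) ∈ E`). -/
def IsKoganPositions (n : ℕ) (E : Finset (ℕ × ℕ)) : Prop :=
  ∀ p ∈ E, 1 ≤ p.2 ∧ p.2 ≤ p.1 ∧ p.1 + 1 ≤ n

/-- The word of a set `E` of Kogan positions: list the positions `(i, j) ∈ E` first by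
increasing `i` and, within each `i`, by increasing `j` (lexicographically), and record
for each the simple transposition `s_{n−i+j−1}` (so, in the `0`-based indexing of the
letters used here, the letter `n − i + j − 2`). -/
def koganWord (n : ℕ) (E : Finset (ℕ × ℕ)) : List ℕ :=
  ((E.image (toLex : ℕ × ℕ → ℕ ×ₗ ℕ)).sort (· ≤ ·)).map
    (fun q => n - (ofLex q).1 + (ofLex q).2 - 2)


open Equiv Finset

variable {n : ℕ}

lemma sT_apply_val {k : ℕ} (h : k + 1 < n) (x : Fin n) :
    (sT n k x : ℕ) = if (x : ℕ) = k then k + 1 else if (x : ℕ) = k + 1 then k else x := by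
  rw [sT, dif_pos h, swap_apply_def]
  split_ifs <;> simp_all [Fin.ext_iff]

lemma sT_apply_of_ne {k : ℕ} {x : Fin n} (hk : (x : ℕ) ≠ k) (hk' : (x : ℕ) ≠ k + 1) :
    sT n k x = x := by
  unfold sT
  split_ifs
  · exact swap_apply_of_ne_of_ne (by simpa [Fin.ext_iff]) (by simpa [Fin.ext_iff])
  · rfl

lemma sT_apply_left {k : ℕ} (h : k + 1 < n) : sT n k ⟨k, by omega⟩ = ⟨k + 1, h⟩ := by
  simp [sT, h]

lemma sT_apply_right {k : ℕ} (h : k + 1 < n) : sT n k ⟨k + 1, h⟩ = ⟨k, by omega⟩ := by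
  simp [sT, h]

lemma sT_mul_self (k : ℕ) : sT n k * sT n k = 1 := by
  unfold sT
  split_ifs <;> simp

lemma sT_lt_sT_iff {k : ℕ} (h : k + 1 < n) {x y : Fin n}
    (hxy : ¬(x = ⟨k, by omega⟩ ∧ y = ⟨k + 1, h⟩)) (hyx : ¬(x = ⟨k + 1, h⟩ ∧ y = ⟨k, by omega⟩)) :
    sT n k x < sT n k y ↔ x < y := by
  simp only [Fin.ext_iff] at hxy hyx
  rw [Fin.lt_def, Fin.lt_def, sT_apply_val h, sT_apply_val h]
  split_ifs <;> omega

lemma invCount_one : invCount (1 : Perm (Fin n)) = 0 := by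
  rw [invCount, card_eq_zero, filter_eq_empty_iff]
  exact fun p _ h => lt_asymm h.1 h.2

lemma invCount_mul_sT_of_lt {k : ℕ} (h : k + 1 < n) {π : Perm (Fin n)}
    (hπ : π ⟨k, by omega⟩ < π ⟨k + 1, h⟩) : invCount (π * sT n k) = invCount π + 1 := by
  set s := sT n k
  have hs : ∀ x, s.symm x = s x := fun x => by
    rw [symm_apply_eq, ← Perm.mul_apply, sT_mul_self, Perm.one_apply]
  have key : univ.filter (fun p : Fin n × Fin n => p.1 < p.2 ∧ (π * s) p.2 < (π * s) p.1) =
      insert (⟨k, by omega⟩, ⟨k + 1, h⟩)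
        ((univ.filter (fun p : Fin n × Fin n => p.1 < p.2 ∧ π p.2 < π p.1)).map
          (s.prodCongr s).toEmbedding) := by
    ext ⟨x, y⟩
    rw [Finset.mem_filter]
    simp only [Finset.mem_filter, mem_univ, true_and, mem_insert, mem_map_equiv, prodCongr_symm,
      prodCongr_apply, Prod.map, Perm.mul_apply, Prod.mk.injEq, hs]
    by_cases hab : x = ⟨k, by omega⟩ ∧ y = ⟨k + 1, h⟩
    · obtain ⟨rfl, rfl⟩ := hab
      simp [s, sT_apply_left h, sT_apply_right h, hπ]
    by_cases hba : x = ⟨k + 1, h⟩ ∧ y = ⟨k, by omega⟩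
    · obtain ⟨rfl, rfl⟩ := hba
      simp [s, sT_apply_left h, sT_apply_right h, hπ.not_gt]
    rw [sT_lt_sT_iff h hab hba]
    tauto
  rw [invCount, invCount, key, card_insert_of_notMem, card_map]
  simp [hs, s, sT_apply_left h, sT_apply_right h]

lemma invCount_mul_sT_of_gt {k : ℕ} (h : k + 1 < n) {π : Perm (Fin n)}
    (hπ : π ⟨k + 1, h⟩ < π ⟨k, by omega⟩) : invCount (π * sT n k) + 1 = invCount π := by
  have := invCount_mul_sT_of_lt h (π := π * sT n k) (by
    simpa only [Perm.mul_apply, sT_apply_left h, sT_apply_right h] using hπ)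
  rwa [mul_assoc, sT_mul_self, mul_one, eq_comm] at this

lemma invCount_mul_sT_le (π : Perm (Fin n)) (k : ℕ) : invCount (π * sT n k) ≤ invCount π + 1 := by
  by_cases h : k + 1 < n
  · rcases lt_trichotomy (π ⟨k, by omega⟩) (π ⟨k + 1, h⟩) with hlt | heq | hgt
    · exact (invCount_mul_sT_of_lt h hlt).le
    · simp [Fin.ext_iff] at heq
    · have := invCount_mul_sT_of_gt h hgt
      omega
  · simp [sT, h]

def wordProd (n : ℕ) (w : List ℕ) : Perm (Fin n) := (w.map (sT n)).prod

@[simp]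
lemma wordProd_nil : wordProd n [] = 1 := rfl

@[simp]
lemma wordProd_cons (a : ℕ) (w : List ℕ) : wordProd n (a :: w) = sT n a * wordProd n w := by
  simp [wordProd]

@[simp]
lemma wordProd_append (u v : List ℕ) : wordProd n (u ++ v) = wordProd n u * wordProd n v := by
  simp [wordProd]

lemma wordProd_concat (w : List ℕ) (a : ℕ) : wordProd n (w ++ [a]) = wordProd n w * sT n a := by
  simp

lemma invCount_mul_wordProd_le (π : Perm (Fin n)) (w : List ℕ) :
    invCount (π * wordProd n w) ≤ invCount π + w.length := by
  induction w generalizing π with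
  | nil => simp
  | cons a w ih =>
    rw [wordProd_cons, ← mul_assoc, List.length_cons]
    have := invCount_mul_sT_le π a
    have := ih (π * sT n a)
    omega

lemma invCount_wordProd_le (w : List ℕ) : invCount (wordProd n w) ≤ w.length := by
  simpa [invCount_one] using invCount_mul_wordProd_le 1 w

lemma IsReducedWordFor.wordProd_left_of_append {σ : Perm (Fin n)} {u v : List ℕ}
    (hred : IsReducedWordFor n σ (u ++ v)) : IsReducedWordFor n (wordProd n u) u := by
  obtain ⟨hval, hprod, hlen⟩ := hred
  refine ⟨fun a ha => hval a (List.mem_append_left v ha), rfl, ?_⟩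
  have hσ : σ = wordProd n u * wordProd n v := by rw [← wordProd_append]; exact hprod.symm
  have := invCount_wordProd_le (n := n) u
  have := invCount_mul_wordProd_le (wordProd n u) v
  rw [← hσ, ← hlen, List.length_append] at this
  omega

lemma IsReducedWordFor.apply_lt_of_concat {σ : Perm (Fin n)} {w : List ℕ} {c : ℕ}
    (hred : IsReducedWordFor n σ (w ++ [c])) (hc : c + 1 < n) :
    σ ⟨c + 1, hc⟩ < σ ⟨c, by omega⟩ := by
  obtain ⟨-, hprod, hlen⟩ := hred
  have hσ : σ * sT n c = wordProd n w := by
    rw [← hprod, ← wordProd, wordProd_concat, mul_assoc, sT_mul_self, mul_one]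
  have hle := invCount_wordProd_le (n := n) w
  rw [← hσ] at hle
  rw [List.length_append, List.length_singleton] at hlen
  refine lt_of_le_of_ne (le_of_not_gt fun hasc => ?_) (fun heq => by simp [Fin.ext_iff] at heq)
  have := invCount_mul_sT_of_lt hc hasc
  omega

lemma wordProd_apply_of_forall_ne {w : List ℕ} {x : Fin n}
    (hw : ∀ a ∈ w, (x : ℕ) ≠ a ∧ (x : ℕ) ≠ a + 1) : wordProd n w x = x := by
  induction w with
  | nil => rfl
  | cons a w ih =>
    obtain ⟨ha, ha'⟩ := hw a List.mem_cons_self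
    rw [wordProd_cons, Perm.mul_apply, ih fun b hb => hw b (List.mem_cons_of_mem a hb),
      sT_apply_of_ne ha ha']

lemma wordProd_range'_apply_val {b t : ℕ} (h : b + t < n) (x : Fin n) :
    (wordProd n (List.range' b t) x : ℕ) =
      if b ≤ (x : ℕ) ∧ (x : ℕ) < b + t then (x : ℕ) + 1
      else if (x : ℕ) = b + t then b else (x : ℕ) := by
  induction t generalizing b with
  | zero =>
    simp only [List.range'_zero, wordProd_nil, Perm.one_apply]
    split_ifs <;> omega
  | succ t ih =>
    rw [List.range'_succ, wordProd_cons, Perm.mul_apply, sT_apply_val (by omega),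
      ih (by omega)]
    split_ifs <;> omega

lemma le_val_apply_iff {σ : Perm (Fin n)} {b : ℕ} (hσ : ∀ x : Fin n, (x : ℕ) < b → σ x = x)
    {y : Fin n} : b ≤ (σ y : ℕ) ↔ b ≤ (y : ℕ) := by
  constructor
  · intro hy
    by_contra! hyb
    rw [hσ y hyb] at hy
    omega
  · intro hy
    by_contra! hσy
    have := σ.injective (hσ (σ y) hσy)
    rw [this] at hσy
    omega

lemma invCount_mul_wordProd_range' {τ : Perm (Fin n)} {b t : ℕ}
    (hτ : ∀ x : Fin n, (x : ℕ) < b + 1 → τ x = x) (h : b + t < n) :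
    invCount (τ * wordProd n (List.range' b t)) = invCount τ + t := by
  induction t with
  | zero => simp
  | succ t ih =>
    replace h : b + t + 1 < n := by omega
    rw [List.range'_1_concat, wordProd_concat, ← mul_assoc]
    set π := τ * wordProd n (List.range' b t)
    have hπb : π ⟨b + t, by omega⟩ = ⟨b, by omega⟩ := by
      have hv : wordProd n (List.range' b t) ⟨b + t, by omega⟩ = ⟨b, by omega⟩ :=
        Fin.ext (by rw [wordProd_range'_apply_val (by omega)]; simp)
      rw [Perm.mul_apply, hv, hτ _ (by simp)]
    have hπt : b + 1 ≤ (π ⟨b + t + 1, h⟩ : ℕ) := by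
      have hv : wordProd n (List.range' b t) ⟨b + t + 1, h⟩ = ⟨b + t + 1, h⟩ :=
        Fin.ext (by rw [wordProd_range'_apply_val (by omega)]; split_ifs <;> simp_all)
      rw [Perm.mul_apply, hv]
      exact (le_val_apply_iff hτ).2 (by simp)
    have hasc : π ⟨b + t, by omega⟩ < π ⟨b + t + 1, h⟩ := by
      rw [hπb, Fin.lt_def]
      exact hπt
    rw [invCount_mul_sT_of_lt h hasc, ih (by omega), add_assoc]

def Avoids132From (σ : Perm (Fin n)) (b : ℕ) : Prop :=
  ¬ ∃ i j k : Fin n, b ≤ (i : ℕ) ∧ i < j ∧ j < k ∧ σ i < σ k ∧ σ k < σ j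

/-- `v = wordProd n (List.range' b t)` is the cycle `b ↦ b+1 ↦ ⋯ ↦ b+t ↦ b`. On positions `≥ b + 1`,
`v⁻¹` is increasing with values `≥ b`, so it carries `132`-patterns of `σ * v⁻¹` to those of `σ`. -/
lemma Avoids132From.mul_inv_wordProd_range' {σ : Perm (Fin n)} {b t : ℕ} (h : b + t < n)
    (hσ : Avoids132From σ b) : Avoids132From (σ * (wordProd n (List.range' b t))⁻¹) (b + 1) := by
  have hv : ∀ x, (wordProd n (List.range' b t) ((wordProd n (List.range' b t))⁻¹ x) : ℕ) = x :=
    fun x => by simp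
  simp only [wordProd_range'_apply_val h] at hv
  set v := wordProd n (List.range' b t)
  have hge : ∀ x : Fin n, b + 1 ≤ (x : ℕ) → b ≤ (v⁻¹ x : ℕ) := fun x hx => by
    have := hv x
    split_ifs at this <;> omega
  have hmono : ∀ x y : Fin n, b + 1 ≤ (x : ℕ) → x < y → v⁻¹ x < v⁻¹ y := fun x y hx hxy => by
    have hx' := hv x
    have hy' := hv y
    rw [Fin.lt_def] at hxy ⊢
    split_ifs at hx' hy' <;> omega
  rintro ⟨i, j, k, hi, hij, hjk, hik, hkj⟩
  exact hσ ⟨v⁻¹ i, v⁻¹ j, v⁻¹ k, hge i hi, hmono i j hi hij,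
    hmono j k (by rw [Fin.lt_def] at hij; omega) hjk, hik, hkj⟩

lemma mul_inv_wordProd_range'_apply_of_lt {σ : Perm (Fin n)} {b : ℕ} (hb : b < n)
    (hσ : ∀ x : Fin n, (x : ℕ) < b → σ x = x) {d : Fin n} (hd : σ d = ⟨b, hb⟩)
    {x : Fin n} (hx : (x : ℕ) < b + 1) :
    (σ * (wordProd n (List.range' b (d - b)))⁻¹) x = x := by
  have hbd := (le_val_apply_iff hσ (y := d)).1 (by simp [hd])
  have h : b + (d - b) < n := by omega
  rw [Perm.mul_apply]
  rcases Nat.lt_succ_iff_lt_or_eq.mp hx with hxb | hxb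
  · have hvx : (wordProd n (List.range' b (d - b)))⁻¹ x = x := by
      rw [Perm.inv_eq_iff_eq]
      exact Fin.ext (by rw [wordProd_range'_apply_val h]; split_ifs <;> omega)
    rw [hvx, hσ x hxb]
  · have hvx : (wordProd n (List.range' b (d - b)))⁻¹ x = d := by
      rw [Perm.inv_eq_iff_eq]
      exact Fin.ext (by rw [wordProd_range'_apply_val h]; split_ifs <;> omega)
    rw [hvx, hd]
    exact Fin.ext hxb.symm

lemma eq_range'_of_wordProd_apply_val_eq {L : List ℕ} (hL : L.Pairwise (· < ·)) {b : ℕ}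
    {x : Fin n} (hLx : ∀ a ∈ L, b ≤ a ∧ a ≤ x ∧ a + 1 < n) (hx : (wordProd n L x : ℕ) = b) :
    L = List.range' b (x - b) := by
  induction L using List.reverseRecOn generalizing x with
  | nil =>
    simp only [wordProd_nil, Perm.one_apply] at hx
    simp [hx]
  | append_singleton L c ih =>
    obtain ⟨hL', -, hLc⟩ := List.pairwise_append.mp hL
    obtain ⟨hbc, hcx, hcn⟩ := hLx c (by simp)
    have hLc' : ∀ a ∈ L, a < c := fun a ha => hLc a ha c (by simp)
    rw [wordProd_concat, Perm.mul_apply] at hx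
    rcases Nat.lt_or_ge (c + 1) x with hlt | hge
    · rw [sT_apply_of_ne (by omega) (by omega), wordProd_apply_of_forall_ne fun a ha => by
        have := hLc' a ha; omega] at hx
      omega
    rcases Nat.lt_or_ge c x with hcx' | hcx'
    · have hx' : x = ⟨c + 1, hcn⟩ := Fin.ext (by simp; omega)
      subst hx'
      rw [sT_apply_right hcn] at hx
      have := ih hL' (x := ⟨c, by omega⟩) (fun a ha => by
        have := hLc' a ha; have := hLx a (by simp [ha]); simp; omega) hx
      rw [this, show c + 1 - b = c - b + 1 by omega, List.range'_1_concat,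
        show b + (c - b) = c by omega]
    · have hx' : x = ⟨c, Nat.lt_of_succ_lt hcn⟩ := Fin.ext (by simp; omega)
      subst hx'
      rw [sT_apply_left hcn, wordProd_apply_of_forall_ne fun a ha => by
        have := hLc' a ha; simp; omega] at hx
      simp at hx
      omega

/-- A letter of `L` beyond `d` would make the last letter `c` of `L` a descent `c, c+1` of `σ` to the
right of `d`, and `σ d = b` completes it to a `132`. -/
lemma IsReducedWordFor.eq_range'_of_avoids132From {σ : Perm (Fin n)} {b : ℕ} (hb : b < n)
    (hfix : ∀ x : Fin n, (x : ℕ) < b → σ x = x) (hσ : Avoids132From σ b) {u L : List ℕ}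
    (hu : ∀ a ∈ u, b < a) (hL : L.Pairwise (· < ·)) (hLb : ∀ a ∈ L, b ≤ a)
    {d : Fin n} (hσd : σ d = ⟨b, hb⟩) (hred : IsReducedWordFor n σ (u ++ L)) :
    L = List.range' b (d - b) := by
  have hbd := (le_val_apply_iff hfix (y := d)).1 (by simp [hσd])
  have hval : ∀ a ∈ L, a + 1 < n := fun a ha => hred.1 a (List.mem_append_right u ha)
  have hub : wordProd n u ⟨b, hb⟩ = ⟨b, hb⟩ :=
    wordProd_apply_of_forall_ne fun a ha => by have := hu a ha; simp; omega
  have hLd : wordProd n L d = ⟨b, hb⟩ := by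
    apply (wordProd n u).injective
    rw [hub, ← Perm.mul_apply, ← wordProd_append, wordProd, hred.2.1, hσd]
  have hLle : ∀ a ∈ L, a ≤ d := by
    intro a ha
    by_contra! hda
    obtain ⟨L', c, rfl⟩ : ∃ L' c, L = L' ++ [c] := by
      simpa using (List.eq_nil_or_concat L).resolve_left (List.ne_nil_of_mem ha)
    have hac : a ≤ c := by
      rcases List.mem_append.mp ha with ha' | ha'
      · exact (List.pairwise_append.mp hL).2.2 a ha' c (by simp) |>.le
      · simp_all
    have hc : c + 1 < n := hval c (by simp)
    have hdesc := IsReducedWordFor.apply_lt_of_concat (w := u ++ L') (by simpa using hred) hc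
    have hσc : b < (σ ⟨c + 1, hc⟩ : ℕ) := by
      have hge := (le_val_apply_iff hfix (y := ⟨c + 1, hc⟩)).2 (by simp; omega)
      have hne : σ ⟨c + 1, hc⟩ ≠ σ d := σ.injective.ne (by simp [Fin.ext_iff]; omega)
      rw [hσd] at hne
      simp [Fin.ext_iff] at hne
      omega
    exact hσ ⟨d, ⟨c, by omega⟩, ⟨c + 1, hc⟩, hbd, by simp [Fin.lt_def]; omega,
      by simp [Fin.lt_def], by rw [hσd, Fin.lt_def]; exact hσc, hdesc⟩
  exact eq_range'_of_wordProd_apply_val_eq hL (fun a ha => ⟨hLb a ha, hLle a ha, hval a ha⟩)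
    (by rw [hLd])

lemma Finset.sort_union_of_forall_lt {α : Type*} [LinearOrder α] {A B : Finset α}
    (h : ∀ a ∈ A, ∀ b ∈ B, a < b) :
    (A ∪ B).sort (· ≤ ·) = A.sort (· ≤ ·) ++ B.sort (· ≤ ·) := by
  refine List.Pairwise.eq_of_mem_iff (r := (· < ·)) (sortedLT_sort _).pairwise ?_ (by simp)
  exact List.pairwise_append.mpr ⟨(sortedLT_sort _).pairwise, (sortedLT_sort _).pairwise,
    fun a ha b hb => h a (by simpa using ha) b (by simpa using hb)⟩

lemma koganWord_union {A B : Finset (ℕ × ℕ)} (h : ∀ p ∈ A, ∀ q ∈ B, p.1 < q.1) :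
    koganWord n (A ∪ B) = koganWord n A ++ koganWord n B := by
  rw [koganWord, image_union, Finset.sort_union_of_forall_lt, List.map_append, koganWord, koganWord]
  simp only [mem_image]
  rintro _ ⟨p, hp, rfl⟩ _ ⟨q, hq, rfl⟩
  exact Prod.Lex.toLex_lt_toLex.mpr (Or.inl (h p hp q hq))

lemma mem_koganWord {E : Finset (ℕ × ℕ)} {a : ℕ} :
    a ∈ koganWord n E ↔ ∃ p ∈ E, n - p.1 + p.2 - 2 = a := by
  simp [koganWord]

lemma koganWord_bounds {m : ℕ} (hm : m ≤ n) {E : Finset (ℕ × ℕ)} (hE : IsKoganPositions m E) :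
    ∀ a ∈ koganWord n E, n - m ≤ a ∧ a + 1 < n := by
  intro a ha
  obtain ⟨p, hp, rfl⟩ := mem_koganWord.mp ha
  have := hE p hp
  omega

lemma koganWord_pairwise_lt_of_row {R : ℕ} (hR : R < n) {E : Finset (ℕ × ℕ)} (hE : ∀ p ∈ E, p.1 = R ∧ 1 ≤ p.2) :
    (koganWord n E).Pairwise (· < ·) := by
  rw [koganWord, List.pairwise_map]
  refine (sortedLT_sort _).pairwise.imp_of_mem fun hq hq' hlt => ?_
  simp only [mem_sort, mem_image] at hq hq'
  obtain ⟨p, hp, rfl⟩ := hq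
  obtain ⟨p', hp', rfl⟩ := hq'
  have := hE p hp
  have := hE p' hp'
  rw [Prod.Lex.toLex_lt_toLex] at hlt
  simp only [ofLex_toLex]
  omega

lemma koganWord_row {R : ℕ} (hR : R < n) (t : ℕ) :
    koganWord n ({R} ×ˢ Icc 1 t) = List.range' (n - 1 - R) t := by
  refine List.Pairwise.eq_of_mem_iff (koganWord_pairwise_lt_of_row hR fun p hp => by simp only [mem_product, mem_singleton, mem_Icc] at hp; omega)
    List.pairwise_lt_range' fun a => ?_
  simp only [mem_koganWord, mem_product, mem_singleton, mem_Icc, List.mem_range'_1]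
  constructor
  · rintro ⟨p, ⟨h1, h2⟩, rfl⟩
    omega
  · rintro ⟨h1, h2⟩
    exact ⟨(R, a + R + 2 - n), by omega, by omega⟩

lemma eq_of_koganWord_eq_of_row {R : ℕ} (hR : R < n) {A B : Finset (ℕ × ℕ)} (hA : ∀ p ∈ A, p.1 = R ∧ 1 ≤ p.2)
    (hB : ∀ p ∈ B, p.1 = R ∧ 1 ≤ p.2) (h : koganWord n A = koganWord n B) : A = B := by
  have key : ∀ E : Finset (ℕ × ℕ), (∀ p ∈ E, p.1 = R ∧ 1 ≤ p.2) → ∀ p : ℕ × ℕ,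
      p.1 = R ∧ 1 ≤ p.2 → (p ∈ E ↔ n - p.1 + p.2 - 2 ∈ koganWord n E) := by
    refine fun E hE p hp => ⟨fun h => mem_koganWord.mpr ⟨p, h, rfl⟩, fun h => ?_⟩
    obtain ⟨q, hq, hqp⟩ := mem_koganWord.mp h
    have := hE q hq
    rwa [show p = q by ext <;> omega]
  ext p
  by_cases hp : p.1 = R ∧ 1 ≤ p.2
  · rw [key A hA p hp, key B hB p hp, h]
  · exact iff_of_false (fun h => hp (hA p h)) (fun h => hp (hB p h))

lemma IsKoganPositions.union_row {m t : ℕ} {A : Finset (ℕ × ℕ)} (hA : IsKoganPositions m A)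
    (ht : t ≤ m) : IsKoganPositions (m + 1) (A ∪ {m} ×ˢ Icc 1 t) := by
  intro p hp
  rcases mem_union.mp hp with hp | hp
  · have := hA p hp
    omega
  · simp only [mem_product, mem_singleton, mem_Icc] at hp
    omega

lemma IsKoganPositions.filter_lt {m : ℕ} {E : Finset (ℕ × ℕ)} (hE : IsKoganPositions (m + 1) E) :
    IsKoganPositions m (E.filter (·.1 < m)) := fun p hp => by
  obtain ⟨hp, hpm⟩ := mem_filter.mp hp
  have := hE p hp
  omega

lemma IsKoganPositions.eq_filter_union {m : ℕ} {E : Finset (ℕ × ℕ)}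
    (hE : IsKoganPositions (m + 1) E) : E = E.filter (·.1 < m) ∪ E.filter (·.1 = m) := by
  rw [← filter_or, filter_true_of_mem fun p hp => by have := hE p hp; omega]

lemma IsReducedWordFor.koganWord_union_row {b m t : ℕ} (hbm : b + m + 1 = n) (ht : t ≤ m)
    {τ : Perm (Fin n)} (hτ : ∀ x : Fin n, (x : ℕ) < b + 1 → τ x = x) {A : Finset (ℕ × ℕ)}
    (hA : IsKoganPositions m A) (hred : IsReducedWordFor n τ (koganWord n A)) :
    IsReducedWordFor n (τ * wordProd n (List.range' b t)) (koganWord n (A ∪ {m} ×ˢ Icc 1 t)) := by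
  have hword : koganWord n (A ∪ {m} ×ˢ Icc 1 t) = koganWord n A ++ List.range' b t := by
    rw [koganWord_union, koganWord_row (by omega), show n - 1 - m = b by omega]
    intro p hp q hq
    have := hA p hp
    simp only [mem_product, mem_singleton] at hq
    omega
  obtain ⟨hval, hprod, hlen⟩ := hred
  rw [hword]
  refine ⟨fun a ha => ?_, ?_, ?_⟩
  · rcases List.mem_append.mp ha with ha | ha
    · exact hval a ha
    · rw [List.mem_range'_1] at ha
      omega
  · rw [← wordProd, wordProd_append, wordProd, hprod]
  · rw [invCount_mul_wordProd_range' hτ (by omega), List.length_append, hlen,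
      List.length_range']

lemma IsReducedWordFor.exists_eq_union_row {b m : ℕ} (hbm : b + m + 1 = n) {σ : Perm (Fin n)}
    (hfix : ∀ x : Fin n, (x : ℕ) < b → σ x = x) (hσ : Avoids132From σ b) {d : Fin n}
    (hd : σ d = ⟨b, by omega⟩) {E : Finset (ℕ × ℕ)} (hE : IsKoganPositions (m + 1) E)
    (hred : IsReducedWordFor n σ (koganWord n E)) :
    ∃ A, IsKoganPositions m A ∧
      IsReducedWordFor n (σ * (wordProd n (List.range' b (d - b)))⁻¹) (koganWord n A) ∧
      E = A ∪ {m} ×ˢ Icc 1 (d - b) := by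
  set A := E.filter (·.1 < m)
  set B := E.filter (·.1 = m)
  have hA : IsKoganPositions m A := hE.filter_lt
  have hB : ∀ p ∈ B, p.1 = m ∧ 1 ≤ p.2 := fun p hp =>
    ⟨(mem_filter.mp hp).2, (hE p (mem_filter.mp hp).1).1⟩
  have hEAB : E = A ∪ B := hE.eq_filter_union
  rw [hEAB, koganWord_union fun p hp q hq => (mem_filter.mp hp).2.trans_eq (hB q hq).1.symm]
    at hred
  have hBword : koganWord n B = List.range' b (d - b) :=
    hred.eq_range'_of_avoids132From (by omega) hfix hσ
      (fun a ha => by have := koganWord_bounds (m := m) (by omega) hA a ha; omega)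
      (koganWord_pairwise_lt_of_row (by omega) hB)
      (fun a ha => by
        have := koganWord_bounds (m := m + 1) (by omega)
          (fun p hp => hE p (filter_subset _ E hp)) a ha
        omega) hd
  refine ⟨A, hA, ?_, ?_⟩
  · have hσ : wordProd n (koganWord n A) * wordProd n (List.range' b (d - b)) = σ := by
      rw [← hBword, ← wordProd_append]
      exact hred.2.1
    rw [← hσ, mul_inv_cancel_right]
    exact hred.wordProd_left_of_append
  · have hmn : m < n := by omega
    rw [hEAB, eq_of_koganWord_eq_of_row hmn hB (B := {m} ×ˢ Icc 1 (d - b))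
      (fun p hp => by simp only [mem_product, mem_singleton, mem_Icc] at hp; omega)
      (by rw [hBword, koganWord_row hmn, show n - 1 - m = b by omega])]

theorem existsUnique_isReducedWordFor_koganWord {m : ℕ} (hm : m ≤ n) {σ : Perm (Fin n)}
    (hfix : ∀ x : Fin n, (x : ℕ) < n - m → σ x = x) (hσ : Avoids132From σ (n - m)) :
    ∃! E, IsKoganPositions m E ∧ IsReducedWordFor n σ (koganWord n E) := by
  induction m generalizing σ with
  | zero =>
    have hσ1 : σ = 1 := Perm.ext fun x => hfix x (by omega)
    refine ⟨∅, ⟨fun p hp => by simp at hp, ?_⟩, fun E ⟨hE, _⟩ => ?_⟩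
    · simp [IsReducedWordFor, koganWord, hσ1, invCount_one]
    · exact eq_empty_of_forall_notMem fun p hp => by have := hE p hp; omega
  | succ m ih =>
    obtain ⟨b, hbm⟩ : ∃ b, b + m + 1 = n := ⟨n - (m + 1), by omega⟩
    rw [show n - (m + 1) = b by omega] at hfix hσ
    obtain ⟨d, hd⟩ := σ.surjective ⟨b, by omega⟩
    have hbd := (le_val_apply_iff hfix (y := d)).1 (by simp [hd])
    set v := wordProd n (List.range' b (d - b))
    obtain ⟨E₀, ⟨hE₀, hred₀⟩, huniq⟩ := ih (σ := σ * v⁻¹) (by omega)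
      (fun x hx => mul_inv_wordProd_range'_apply_of_lt (by omega) hfix hd (by omega))
      (by rw [show n - m = b + 1 by omega]; exact hσ.mul_inv_wordProd_range' (by omega))
    refine ⟨E₀ ∪ {m} ×ˢ Icc 1 (d - b), ⟨hE₀.union_row (by omega), ?_⟩, ?_⟩
    · simpa [v] using hred₀.koganWord_union_row (t := d - b) hbm (by omega)
        (fun x hx => mul_inv_wordProd_range'_apply_of_lt (by omega) hfix hd hx) hE₀
    · rintro E ⟨hE, hred⟩
      obtain ⟨A, hA, hredA, rfl⟩ := hred.exists_eq_union_row hbm hfix hσ hd hE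
      rw [huniq A ⟨hA, hredA⟩]

theorem unique_reduced_kogan_face_of_avoids_132_general (n : ℕ)
    (σ : Equiv.Perm (Fin n))
    (hσ : ¬ ∃ i j k : Fin n, i < j ∧ j < k ∧ σ i < σ k ∧ σ k < σ j) :
    ∃! E : Finset (ℕ × ℕ), IsKoganPositions n E ∧
      IsReducedWordFor n σ (koganWord n E) :=
  existsUnique_isReducedWordFor_koganWord le_rfl (fun x hx => by omega)
    fun ⟨i, j, k, _, hijk⟩ => hσ ⟨i, j, k, hijk⟩

/-- If `σ ∈ S_n` avoids the pattern `132`, then there is a unique reduced Kogan face of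
type `σ`: exactly one set `E` of positions whose word is a reduced word for `σ`. -/
theorem unique_reduced_kogan_face_of_avoids_132 (n : ℕ) (hn : 1 ≤ n)
    (σ : Equiv.Perm (Fin n))
    (hσ : ¬ ∃ i j k : Fin n, i < j ∧ j < k ∧ σ i < σ k ∧ σ k < σ j) :
    ∃! E : Finset (ℕ × ℕ), IsKoganPositions n E ∧
      IsReducedWordFor n σ (koganWord n E) :=
  unique_reduced_kogan_face_of_avoids_132_general n σ hσ
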